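/- arXiv:1006.2675 — 7 statements merged into one kernel-verified Lean document; each statement's English description precedes it below -/
import Mathlib

section
/- Let X be a Polish space and H a hereditary, dense G_δ subset of the hyperspace K(X) of compact subsets of X with the Vietoris topology. Then there exists a sequence (U_n) of open, dense, and hereditary subsets of K(X) such that H = ⋂_n U_n. -/
/-!
Write `H = ⋂ n, V n` with `V n` open. The largest hereditary subset of `V n`, the set of
compacta all of whose compact subsets lie in `V n`, contains `H` because `H` is hereditary,
so it is dense, and the intersection of these sets is still `H`. It is open: the compact
subsets of a fixed compactum `K` form a compact subset of the hyperspace, so a whole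
`δ`-neighbourhood of them lies in `V n`, and a compact subset of a compactum `L` close to `K`
is `δ`-close to a compact subset of `K`, namely the part of `K` near it.
-/

open TopologicalSpace

/-- A subset of the hyperspace of nonempty compact sets is hereditary if it is closed
under taking (nonempty) compact subsets. -/
def Hereditary {X : Type*} [MetricSpace X] (H : Set (NonemptyCompacts X)) : Prop :=
  ∀ K ∈ H, ∀ C : NonemptyCompacts X, (C : Set X) ⊆ (K : Set X) → C ∈ H

open Metric EMetric Set

def hereditaryKernel {X : Type*} [TopologicalSpace X] (V : Set (NonemptyCompacts X)) :
    Set (NonemptyCompacts X) :=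
  {K | ∀ C : NonemptyCompacts X, (C : Set X) ⊆ K → C ∈ V}

section HereditaryKernel

variable {X : Type*}

theorem hereditaryKernel_subset [TopologicalSpace X] (V : Set (NonemptyCompacts X)) :
    hereditaryKernel V ⊆ V :=
  fun K hK => hK K subset_rfl

theorem hereditary_hereditaryKernel [MetricSpace X] (V : Set (NonemptyCompacts X)) :
    Hereditary (hereditaryKernel V) :=
  fun _ hK _ hCK D hDC => hK D (hDC.trans hCK)

theorem Hereditary.subset_hereditaryKernel [MetricSpace X] {H V : Set (NonemptyCompacts X)}
    (hH : Hereditary H) (hHV : H ⊆ V) : H ⊆ hereditaryKernel V :=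
  fun K hK C hCK => hHV (hH K hK C hCK)

theorem NonemptyCompacts.exists_subset_edist_le_of_subset [EMetricSpace X]
    {C L K : NonemptyCompacts X} {δ : ℝ} (hCL : (C : Set X) ⊆ L)
    (hLK : edist L K < ENNReal.ofReal δ) :
    ∃ C' : NonemptyCompacts X, (C' : Set X) ⊆ K ∧ edist C C' ≤ ENNReal.ofReal δ := by
  have near_K : ∀ x ∈ (C : Set X), ∃ y ∈ (K : Set X), edist x y < ENNReal.ofReal δ :=
    fun x hx => exists_edist_lt_of_hausdorffEDist_lt (hCL hx) hLK
  have near_K_mem : ∀ x ∈ (C : Set X), ∃ y ∈ (K : Set X) ∩ cthickening δ C,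
      edist x y < ENNReal.ofReal δ := by
    intro x hx
    obtain ⟨y, hyK, hxy⟩ := near_K x hx
    exact ⟨y, ⟨hyK, mem_cthickening_of_edist_le y x δ _ hx (edist_comm x y ▸ hxy.le)⟩, hxy⟩
  obtain ⟨x₀, hx₀⟩ := C.nonempty
  obtain ⟨y₀, hy₀, -⟩ := near_K_mem x₀ hx₀
  refine ⟨⟨⟨_, K.isCompact.inter_right isClosed_cthickening⟩, ⟨y₀, hy₀⟩⟩,
    inter_subset_left, hausdorffEDist_le_of_infEDist ?_ ?_⟩
  · intro x hx
    obtain ⟨y, hy, hxy⟩ := near_K_mem x hx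
    exact (infEDist_le_edist_of_mem hy).trans hxy.le
  · exact fun y hy => mem_cthickening_iff.mp hy.2

theorem IsOpen.hereditaryKernel [EMetricSpace X] {V : Set (NonemptyCompacts X)}
    (hV : IsOpen V) : IsOpen (hereditaryKernel V) := by
  refine EMetric.isOpen_iff.mpr fun K hK => ?_
  obtain ⟨δ, hδ, hδV⟩ := (NonemptyCompacts.isCompact_subsets_of_isCompact K.isCompact)
    |>.exists_thickening_subset_open hV hK
  refine ⟨ENNReal.ofReal (δ / 2), by simpa using hδ, fun L hL C hCL => hδV ?_⟩
  obtain ⟨C', hC'K, hCC'⟩ := NonemptyCompacts.exists_subset_edist_le_of_subset hCL hL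
  refine (mem_thickening_iff_exists_edist_lt _ _).mpr ⟨C', hC'K, hCC'.trans_lt ?_⟩
  exact (ENNReal.ofReal_lt_ofReal_iff hδ).mpr (half_lt_self hδ)

end HereditaryKernel

theorem normal_form_exists_general {X : Type*} [MetricSpace X]
    (H : Set (NonemptyCompacts X)) (hher : Hereditary H) (hdense : Dense H)
    (hGδ : IsGδ H) :
    ∃ U : ℕ → Set (NonemptyCompacts X),
      (∀ n, IsOpen (U n)) ∧ (∀ n, Dense (U n)) ∧ (∀ n, Hereditary (U n)) ∧
        H = ⋂ n, U n := by
  obtain ⟨V, hVopen, hHV⟩ := hGδ.eq_iInter_nat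
  have hH_sub : ∀ n, H ⊆ hereditaryKernel (V n) :=
    fun n => hher.subset_hereditaryKernel (hHV ▸ iInter_subset V n)
  refine ⟨fun n => hereditaryKernel (V n), fun n => (hVopen n).hereditaryKernel,
    fun n => hdense.mono (hH_sub n), fun n => hereditary_hereditaryKernel (V n),
    (subset_iInter hH_sub).antisymm ?_⟩
  rw [hHV]
  exact iInter_mono fun n => hereditaryKernel_subset (V n)

theorem normal_form_exists {X : Type*} [MetricSpace X] [PolishSpace X]
    (H : Set (NonemptyCompacts X)) (hher : Hereditary H) (hdense : Dense H)
    (hGδ : IsGδ H) :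
    ∃ U : ℕ → Set (NonemptyCompacts X),
      (∀ n, IsOpen (U n)) ∧ (∀ n, Dense (U n)) ∧ (∀ n, Hereditary (U n)) ∧
        H = ⋂ n, U n :=
  normal_form_exists_general H hher hdense hGδ
end

section
/- Let X be a Polish space with compatible complete metric d, and let H ⊆ K(X) be a dense G_δ set written as H = ⋂_n V_n with each V_n open and dense. For each n, the set C_n = {K ∈ K(X) : there exists a compact C ⊆ K with C ∉ V_n} is closed in K(X) and disjoint from H, provided H is hereditary. -/
/-!
If `K m → K` and each `K m` contains a compact `C m ∉ V n`, then all `C m` lie in the compact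
hyperspace of the compact set `K ∪ ⋃ m, K m`, so a subsequence converges to some `C`. Inclusion is
a closed relation in the Vietoris topology (which is the topology of the Hausdorff metric) and the
complement of `V n` is closed, so `C ⊆ K` and `C ∉ V n`. Disjointness from `H` is heredity
together with `H ⊆ V n`.
-/

open TopologicalSpace

open Filter Set

namespace TopologicalSpace.NonemptyCompacts

theorem isClosed_setOf_coe_subset_coe {X : Type*} [TopologicalSpace X] [T2Space X] :
    IsClosed {p : NonemptyCompacts X × NonemptyCompacts X | (p.1 : Set X) ⊆ p.2} := by
  rw [← isOpen_compl_iff, isOpen_iff_forall_mem_open]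
  rintro ⟨C, K⟩ hCK
  obtain ⟨x, hxC, hxK⟩ := not_subset.mp hCK
  obtain ⟨U, W, hU, hW, hxU, hKW, hUW⟩ :=
    SeparatedNhds.of_isCompact_isCompact isCompact_singleton K.isCompact
      (disjoint_singleton_left.mpr hxK)
  refine ⟨{C' : NonemptyCompacts X | ((C' : Set X) ∩ U).Nonempty} ×ˢ
    {K' : NonemptyCompacts X | (K' : Set X) ⊆ W}, ?_,
    (isOpen_inter_nonempty_of_isOpen hU).prod (isOpen_subsets_of_isOpen hW),
    ⟨x, hxC, hxU rfl⟩, hKW⟩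
  rintro ⟨C', K'⟩ ⟨⟨y, hyC', hyU⟩, hK'W⟩ hC'K'
  exact hUW.le_bot ⟨hyU, hK'W (hC'K' hyC')⟩

theorem isClosed_setOf_exists_subset_mem {X : Type*} [MetricSpace X]
    {F : Set (NonemptyCompacts X)} (hF : IsClosed F) :
    IsClosed {K : NonemptyCompacts X | ∃ C : NonemptyCompacts X, (C : Set X) ⊆ K ∧ C ∈ F} := by
  refine IsSeqClosed.isClosed fun K L hK hKL => ?_
  choose C hCK hCF using hK
  have hB : IsCompact (⋃ K' ∈ insert L (range K), (K' : Set X)) :=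
    isCompact_biUnion_coe_of_isCompact hKL.isCompact_insert_range
  obtain ⟨D, -, φ, hφ, hCD⟩ := (isCompact_subsets_of_isCompact hB).tendsto_subseq (x := C)
    fun m => (hCK m).trans (subset_biUnion_of_mem (mem_insert_of_mem _ (mem_range_self m)))
  refine ⟨D, ?_, hF.mem_of_tendsto hCD (Eventually.of_forall fun m => hCF (φ m))⟩
  exact isClosed_setOf_coe_subset_coe.mem_of_tendsto (hCD.prodMk_nhds (hKL.comp hφ.tendsto_atTop))
    (Eventually.of_forall fun m => hCK (φ m))

end TopologicalSpace.NonemptyCompacts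

theorem Hereditary.disjoint_setOf_exists_subset_notMem {X : Type*} [MetricSpace X]
    {H U : Set (NonemptyCompacts X)} (hher : Hereditary H) (hHU : H ⊆ U) :
    Disjoint {K : NonemptyCompacts X | ∃ C : NonemptyCompacts X, (C : Set X) ⊆ K ∧ C ∉ U} H :=
  disjoint_left.mpr fun _ ⟨C, hCK, hCU⟩ hK => hCU (hHU (hher _ hK C hCK))

theorem bad_sets_closed_and_disjoint_general {X : Type*} [MetricSpace X]
    (V : ℕ → Set (NonemptyCompacts X)) (hopen : ∀ n, IsOpen (V n))
    (H : Set (NonemptyCompacts X))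
    (hH : H = ⋂ n, V n) (hher : Hereditary H) (n : ℕ) :
    IsClosed {K : NonemptyCompacts X |
        ∃ C : NonemptyCompacts X, (C : Set X) ⊆ (K : Set X) ∧ C ∉ V n} ∧
      Disjoint {K : NonemptyCompacts X |
        ∃ C : NonemptyCompacts X, (C : Set X) ⊆ (K : Set X) ∧ C ∉ V n} H :=
  ⟨NonemptyCompacts.isClosed_setOf_exists_subset_mem (hopen n).isClosed_compl,
    hher.disjoint_setOf_exists_subset_notMem (hH ▸ iInter_subset V n)⟩

theorem bad_sets_closed_and_disjoint {X : Type*} [MetricSpace X] [PolishSpace X]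
    (V : ℕ → Set (NonemptyCompacts X)) (hopen : ∀ n, IsOpen (V n))
    (hdense : ∀ n, Dense (V n)) (H : Set (NonemptyCompacts X))
    (hH : H = ⋂ n, V n) (hher : Hereditary H) (n : ℕ) :
    IsClosed {K : NonemptyCompacts X |
        ∃ C : NonemptyCompacts X, (C : Set X) ⊆ (K : Set X) ∧ C ∉ V n} ∧
      Disjoint {K : NonemptyCompacts X |
        ∃ C : NonemptyCompacts X, (C : Set X) ⊆ (K : Set X) ∧ C ∉ V n} H :=
  bad_sets_closed_and_disjoint_general V hopen H hH hher n
end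

section
/- Let X be a Polish space and U ⊆ K(X) an open, dense, and hereditary subset of the hyperspace of compact sets. Given distinct points x_0, ..., x_n in X and r > 0, there exist distinct points y_0, ..., y_n in X such that d(x_i, y_i) < r for all i ∈ {0,...,n} and the finite set {y_0, ..., y_n} belongs to U. -/
/-!
Choose `ε ≤ r` so small that the points `xᵢ` are more than `2ε` apart. By density, `U` contains
a compact set `K` within Hausdorff distance `ε` of the finite set `{x₀, …, xₙ}`, so each `xᵢ`
has some `yᵢ ∈ K` with `d(xᵢ, yᵢ) < ε`. The separation keeps the `yᵢ` distinct, and `{y₀, …, yₙ}`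
lies in `U` because it is a compact subset of `K ∈ U`.
-/

open TopologicalSpace

open Filter Topology

section

variable {X : Type*} [MetricSpace X]

def TopologicalSpace.NonemptyCompacts.ofFiniteRange {ι : Type*} [Finite ι] [Nonempty ι]
    (x : ι → X) : NonemptyCompacts X :=
  ⟨⟨Set.range x, (Set.finite_range x).isCompact⟩, Set.range_nonempty x⟩

theorem TopologicalSpace.NonemptyCompacts.exists_dist_lt_of_dist_lt {K L : NonemptyCompacts X}
    {p : X} {ε : ℝ} (hp : p ∈ K) (hKL : dist K L < ε) : ∃ q ∈ L, dist p q < ε :=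
  Metric.exists_dist_lt_of_hausdorffDist_lt hp hKL (edist_ne_top K L)

theorem Function.Injective.eventually_forall_two_mul_lt_dist {ι : Type*} [Finite ι]
    {x : ι → X} (hx : Function.Injective x) :
    ∀ᶠ ε in 𝓝 (0 : ℝ), ∀ i j, i ≠ j → 2 * ε < dist (x i) (x j) := by
  refine eventually_all.2 fun i => eventually_all.2 fun j => ?_
  by_cases hij : i = j
  · exact .of_forall fun _ h => absurd hij h
  · have hpos : 2 * (0 : ℝ) < dist (x i) (x j) := by
      simpa using dist_pos.2 (hx.ne hij)
    exact ((continuous_const_mul 2).tendsto 0).eventually (gt_mem_nhds hpos) |>.mono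
      fun _ h _ => h

theorem injective_of_dist_lt_of_two_mul_lt_dist {ι : Type*} {x y : ι → X} {ε : ℝ}
    (hsep : ∀ i j, i ≠ j → 2 * ε < dist (x i) (x j)) (hxy : ∀ i, dist (x i) (y i) < ε) :
    Function.Injective y := by
  intro i j hyij
  by_contra hij
  have hi := hxy i
  rw [hyij] at hi
  linarith [hsep i j hij, dist_triangle_right (x i) (x j) (y j), hxy j]

theorem Hereditary.exists_near_range_mem {U : Set (NonemptyCompacts X)} (hher : Hereditary U)
    (hdense : Dense U) {ι : Type*} [Finite ι] [Nonempty ι] (x : ι → X) {ε : ℝ} (hε : 0 < ε) :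
    ∃ y : ι → X, (∀ i, dist (x i) (y i) < ε) ∧ NonemptyCompacts.ofFiniteRange y ∈ U := by
  obtain ⟨K, hKU, hK⟩ := Metric.mem_closure_iff.1 (hdense (.ofFiniteRange x)) ε hε
  choose y hyK hy using fun i =>
    NonemptyCompacts.exists_dist_lt_of_dist_lt (Set.mem_range_self i) hK
  exact ⟨y, hy, hher K hKU _ (Set.range_subset_iff.2 hyK)⟩

end

theorem perturb_finite_set_into_open_dense_hereditary_general {X : Type*} [MetricSpace X]
    (U : Set (NonemptyCompacts X))
    (hdense : Dense U) (hher : Hereditary U) (n : ℕ) (x : Fin (n + 1) → X)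
    (hx : Function.Injective x) (r : ℝ) (hr : 0 < r) :
    ∃ (y : Fin (n + 1) → X) (K : NonemptyCompacts X),
      Function.Injective y ∧ (∀ i, dist (x i) (y i) < r) ∧
        (K : Set X) = Set.range y ∧ K ∈ U := by
  obtain ⟨ε, hε, hsep, hεr⟩ :=
    (hx.eventually_forall_two_mul_lt_dist.and (gt_mem_nhds hr)).exists_gt
  obtain ⟨y, hy, hyU⟩ := hher.exists_near_range_mem hdense x hε
  exact ⟨y, _, injective_of_dist_lt_of_two_mul_lt_dist hsep hy,
    fun i => (hy i).trans hεr, rfl, hyU⟩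

theorem perturb_finite_set_into_open_dense_hereditary {X : Type*} [MetricSpace X]
    [PolishSpace X] (U : Set (NonemptyCompacts X)) (hopen : IsOpen U)
    (hdense : Dense U) (hher : Hereditary U) (n : ℕ) (x : Fin (n + 1) → X)
    (hx : Function.Injective x) (r : ℝ) (hr : 0 < r) :
    ∃ (y : Fin (n + 1) → X) (K : NonemptyCompacts X),
      Function.Injective y ∧ (∀ i, dist (x i) (y i) < r) ∧
        (K : Set X) = Set.range y ∧ K ∈ U :=
  perturb_finite_set_into_open_dense_hereditary_general U hdense hher n x hx r hr
end

section
/- Let X be a Polish space, U ⊆ K(X) open, dense, and hereditary, and ε > 0. Then the set G_{U,ε} = {μ ∈ P(X) : there exists K ∈ U with μ(K) ≥ 1 − ε} contains a dense open subset of P(X); in particular it is comeager in P(X). -/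
open TopologicalSpace MeasureTheory

/-! The dense open set consists of the measures giving mass `> 1 - ε` to some open `V` all of
whose nonempty compact subsets lie in `U`. It is open because `μ ↦ μ V` is lower semicontinuous
for open `V`, and its members lie in `G_{U,ε}` by inner regularity of finite Borel measures on
Polish spaces. For density, given `μ`, pick a compact `K₀` carrying most of `μ`, some `K ∈ U`
Hausdorff-close to `K₀`, and push `μ` forward by a measurable map into `K` that moves the points
of `K₀` only a little. The image measure is Lévy–Prokhorov close to `μ` and is carried by `K`,
hence by a neighbourhood `V` of `K` that openness and heredity of `U` keep inside `U`. -/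

open Metric Set Filter
open scoped ENNReal

section PseudoMetric

variable {X : Type*} [PseudoMetricSpace X] [MeasurableSpace X]

lemma IsCompact.exists_measurable_approx_of_subset_thickening [OpensMeasurableSpace X]
    {K K₀ : Set X} (hK : IsCompact K) (hne : K.Nonempty) {r : ℝ} (hr : 0 < r)
    (hK₀ : K₀ ⊆ thickening r K) :
    ∃ f : X → X, Measurable f ∧ (∀ x, f x ∈ K) ∧ ∀ x ∈ K₀, dist (f x) x < 2 * r := by
  have : SeparableSpace K := hK.isSeparable.separableSpace
  have : Nonempty K := hne.to_subtype
  set e : ℕ → X := fun n => denseSeq K n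
  have hcover : K ⊆ ⋃ N, ⋃ n ≤ N, ball (e n) r := by
    intro k hk
    obtain ⟨n, hn⟩ := (denseRange_denseSeq K).exists_dist_lt ⟨k, hk⟩ hr
    exact mem_iUnion.mpr ⟨n, mem_iUnion₂.mpr ⟨n, le_rfl, mem_ball.mpr hn⟩⟩
  obtain ⟨N, hN⟩ := hK.elim_directed_cover _ (fun N => isOpen_biUnion fun n _ => isOpen_ball)
    hcover (Monotone.directed_le fun _ _ h => biUnion_mono (fun _ hn => le_trans hn h)
      fun _ _ => subset_rfl)
  -- `e 0, …, e N` is an `r`-net of `K`; the nearest-point map to a finite net is a simple function.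
  refine ⟨SimpleFunc.nearestPt e N, SimpleFunc.measurable _, fun x => ?_, fun x hx => ?_⟩
  · rw [SimpleFunc.nearestPt, SimpleFunc.map_apply]
    exact Subtype.prop _
  · obtain ⟨k, hk, hxk⟩ := mem_thickening_iff.mp (hK₀ hx)
    obtain ⟨n, hn, hkn⟩ := mem_iUnion₂.mp (hN hk)
    rw [← edist_lt_ofReal]
    calc edist (SimpleFunc.nearestPt e N x) x
        ≤ edist (e n) x := SimpleFunc.edist_nearestPt_le e x hn
      _ < ENNReal.ofReal (2 * r) := by
        rw [edist_lt_ofReal]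
        linarith [dist_triangle (e n) k x, mem_ball'.mp hkn, dist_comm x k]

lemma levyProkhorovDist_map_le [OpensMeasurableSpace X] (μ : Measure X) [IsProbabilityMeasure μ]
    {f : X → X} (hf : Measurable f) {K₀ : Set X} {b : ℝ} (hb : 0 ≤ b)
    (hK₀ : μ K₀ᶜ ≤ ENNReal.ofReal b) (hfK₀ : ∀ x ∈ K₀, dist (f x) x < b) :
    levyProkhorovDist μ (μ.map f) ≤ b := by
  have := μ.isProbabilityMeasure_map hf.aemeasurable
  refine levyProkhorovDist_le_of_forall_le _ _ hb fun ε B hε _ => ?_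
  have hpre : B ∩ K₀ ⊆ f ⁻¹' thickening ε B := fun x ⟨hxB, hxK₀⟩ =>
    mem_thickening_iff.mpr ⟨x, hxB, (hfK₀ x hxK₀).trans hε⟩
  calc μ B ≤ μ (B ∩ K₀) + μ (B \ K₀) := measure_le_inter_add_sdiff μ B K₀
    _ ≤ μ.map f (thickening ε B) + ENNReal.ofReal ε := by
      rw [Measure.map_apply hf isOpen_thickening.measurableSet]
      gcongr
      exact (measure_mono (sdiff_subset_compl _ _)).trans
        (hK₀.trans (ENNReal.ofReal_le_ofReal hε.le))

lemma ProbabilityMeasure.lowerSemicontinuous_apply_of_isOpen [OpensMeasurableSpace X]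
    {G : Set X} (hG : IsOpen G) :
    LowerSemicontinuous fun μ : ProbabilityMeasure X => (μ : Measure X) G :=
  lowerSemicontinuous_iff_le_liminf.mpr fun _ =>
    ProbabilityMeasure.le_liminf_measure_open_of_tendsto tendsto_id hG

lemma ProbabilityMeasure.dense_of_forall_levyProkhorovDist_lt [SeparableSpace X] [BorelSpace X]
    {S : Set (ProbabilityMeasure X)}
    (h : ∀ μ : ProbabilityMeasure X, ∀ r > 0, ∃ ν ∈ S, levyProkhorovDist (μ : Measure X) ν < r) :
    Dense S := by
  rw [← LevyProkhorov.probabilityMeasureHomeomorph.isDenseEmbedding.dense_image,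
    Metric.dense_iff]
  intro μ r hr
  obtain ⟨ν, hν, hμν⟩ := h (LevyProkhorov.toMeasure μ) r hr
  exact ⟨_, by rwa [mem_ball', LevyProkhorov.dist_probabilityMeasure_def], mem_image_of_mem _ hν⟩

end PseudoMetric

section Hyperspace

variable {X : Type*} [MetricSpace X]

lemma Hereditary.exists_isOpen_superset {U : Set (NonemptyCompacts X)} (hher : Hereditary U)
    (hopen : IsOpen U) {K : NonemptyCompacts X} (hK : K ∈ U) :
    ∃ V : Set X, IsOpen V ∧ (K : Set X) ⊆ V ∧
      ∀ C : NonemptyCompacts X, (C : Set X) ⊆ V → C ∈ U := by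
  obtain ⟨δ, hδ, hball⟩ := Metric.isOpen_iff.mp hopen K hK
  have hδ₂ := (half_pos hδ).le
  refine ⟨thickening (δ / 2) K, isOpen_thickening, self_subset_thickening (half_pos hδ) _,
    fun C hC => hher (C ⊔ K) (hball ?_) C (by simp)⟩
  have hCK : ∀ x ∈ (C : Set X) ∪ K, ∃ y ∈ (K : Set X), dist x y ≤ δ / 2 := by
    rintro x (hx | hx)
    · obtain ⟨y, hy, hxy⟩ := mem_thickening_iff.mp (hC hx)
      exact ⟨y, hy, hxy.le⟩
    · exact ⟨x, hx, by rwa [dist_self]⟩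
  rw [mem_ball, NonemptyCompacts.dist_eq, NonemptyCompacts.coe_sup]
  refine (hausdorffDist_le_of_mem_dist hδ₂ hCK fun y hy => ?_).trans_lt
    (half_lt_self hδ)
  exact ⟨y, Or.inr hy, by rwa [dist_self]⟩

lemma Dense.exists_mem_subset_thickening [Nonempty X] {U : Set (NonemptyCompacts X)}
    (hU : Dense U) {K₀ : Set X} (hK₀ : IsCompact K₀) {r : ℝ} (hr : 0 < r) :
    ∃ K ∈ U, K₀ ⊆ thickening r (K : Set X) := by
  obtain ⟨x⟩ := ‹Nonempty X›
  let L : NonemptyCompacts X := ⟨⟨K₀ ∪ {x}, hK₀.union isCompact_singleton⟩, x, Or.inr rfl⟩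
  obtain ⟨K, hKL, hKU⟩ := Metric.dense_iff.mp hU L r hr
  refine ⟨K, hKU, fun y hy => mem_thickening_iff.mpr ?_⟩
  rw [mem_ball', NonemptyCompacts.dist_eq] at hKL
  exact exists_dist_lt_of_hausdorffDist_lt (Or.inl hy : y ∈ (L : Set X)) hKL (edist_ne_top L K)

variable [MeasurableSpace X]

def chargingOpenIn (U : Set (NonemptyCompacts X)) (c : ℝ≥0∞) : Set (ProbabilityMeasure X) :=
  {μ | ∃ V : Set X, IsOpen V ∧ (∀ C : NonemptyCompacts X, (C : Set X) ⊆ V → C ∈ U) ∧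
    c < (μ : Measure X) V}

lemma isOpen_chargingOpenIn [OpensMeasurableSpace X] (U : Set (NonemptyCompacts X)) (c : ℝ≥0∞) :
    IsOpen (chargingOpenIn U c) := by
  refine isOpen_iff_mem_nhds.mpr ?_
  rintro μ ⟨V, hV, hVU, hμV⟩
  filter_upwards [ProbabilityMeasure.lowerSemicontinuous_apply_of_isOpen hV μ c hμV] with ν hν
    using ⟨V, hV, hVU, hν⟩

lemma chargingOpenIn_subset [PolishSpace X] [BorelSpace X] (U : Set (NonemptyCompacts X))
    (c : ℝ) : chargingOpenIn U (ENNReal.ofReal c) ⊆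
      {μ : ProbabilityMeasure X | ∃ K ∈ U, c ≤ (μ (K : Set X) : ℝ)} := by
  rintro μ ⟨V, hV, hVU, hμV⟩
  obtain ⟨C, hCV, hC, hμC⟩ := hV.measurableSet.exists_lt_isCompact hμV
  have hCne : C.Nonempty := nonempty_of_measure_ne_zero (pos_of_gt hμC).ne'
  refine ⟨⟨⟨C, hC⟩, hCne⟩, hVU _ hCV, ?_⟩
  rw [← ProbabilityMeasure.measureReal_eq_coe_coeFn]
  exact (ENNReal.ofReal_le_iff_le_toReal (measure_ne_top _ _)).mp hμC.le

lemma dense_chargingOpenIn [PolishSpace X] [BorelSpace X] {U : Set (NonemptyCompacts X)}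
    (hopen : IsOpen U) (hdense : Dense U) (hher : Hereditary U) {c : ℝ≥0∞} (hc : c < 1) :
    Dense (chargingOpenIn U c) := by
  refine ProbabilityMeasure.dense_of_forall_levyProkhorovDist_lt fun μ r hr => ?_
  have := μ.nonempty
  obtain ⟨K₀, -, hK₀, hμK₀⟩ := MeasurableSet.univ.exists_isCompact_sdiff_lt
    (measure_ne_top (μ : Measure X) _) (ENNReal.ofReal_pos.mpr (half_pos hr)).ne'
  obtain ⟨K, hKU, hK₀K⟩ := hdense.exists_mem_subset_thickening hK₀ (by positivity : 0 < r / 4)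
  obtain ⟨f, hf, hfK, hfK₀⟩ :=
    K.isCompact.exists_measurable_approx_of_subset_thickening K.nonempty (by positivity) hK₀K
  obtain ⟨V, hV, hKV, hVU⟩ := hher.exists_isOpen_superset hopen hKU
  refine ⟨μ.map hf.aemeasurable, ⟨V, hV, hVU, ?_⟩, ?_⟩
  · rw [ProbabilityMeasure.toMeasure_map, Measure.map_apply hf hV.measurableSet,
      preimage_eq_univ_iff.mpr fun _ ⟨x, hx⟩ => hx ▸ hKV (hfK x), measure_univ]
    exact hc
  · have hμK₀c : (μ : Measure X) K₀ᶜ ≤ ENNReal.ofReal (r / 2) := by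
      simpa [compl_eq_univ_sdiff] using hμK₀.le
    refine (levyProkhorovDist_map_le μ hf (half_pos hr).le hμK₀c fun x hx => ?_).trans_lt
      (half_lt_self hr)
    linarith [hfK₀ x hx]

end Hyperspace

theorem measures_concentrated_on_open_dense_hereditary {X : Type*} [MetricSpace X]
    [PolishSpace X] [MeasurableSpace X] [BorelSpace X]
    (U : Set (NonemptyCompacts X)) (hopen : IsOpen U) (hdense : Dense U)
    (hher : Hereditary U) (ε : ℝ) (hε : 0 < ε) :
    ∃ D : Set (ProbabilityMeasure X), IsOpen D ∧ Dense D ∧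
      D ⊆ {μ : ProbabilityMeasure X |
        ∃ K ∈ U, 1 - ε ≤ (μ ((K : NonemptyCompacts X) : Set X) : ℝ)} := by
  refine ⟨chargingOpenIn U (ENNReal.ofReal (1 - ε)), isOpen_chargingOpenIn U _,
    dense_chargingOpenIn hopen hdense hher ?_, chargingOpenIn_subset U (1 - ε)⟩
  exact ENNReal.ofReal_lt_one.mpr (by linarith)
end

section
/- Let G be a Polish group and C ⊆ G a closed nowhere dense set with 1 ∉ C. Then the set U = {K ∈ K(G) : K⁻¹K ∩ C = ∅} is an open, hereditary, and dense subset of K(G). -/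
/-!
The topology on `NonemptyCompacts G` is the Vietoris topology. Openness: `K ↦ K⁻¹K` is
Vietoris-continuous and `{L | L ⊆ Cᶜ}` is Vietoris-open. Density: finite sets are dense, and a
finite set is the range of a tuple `y : ι → G`. The tuples with `(y i)⁻¹ * y j ∉ C` for all
`i, j` form a finite intersection of open dense sets: for `i ≠ j` the map `y ↦ (y i)⁻¹ * y j` is
open, so it pulls the dense set `Cᶜ` back to a dense set, and for `i = j` the condition is `1 ∉ C`.
-/

open TopologicalSpace Pointwise

open Set

universe u

theorem dense_iInter_of_isOpen_of_finite {X ι : Type*} [TopologicalSpace X] [Finite ι]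
    {f : ι → Set X} (ho : ∀ i, IsOpen (f i)) (hd : ∀ i, Dense (f i)) : Dense (⋂ i, f i) := by
  rw [← sInter_range]
  exact (finite_range f).dense_sInter (forall_mem_range.2 ho) (forall_mem_range.2 hd)

namespace TopologicalSpace.NonemptyCompacts

variable {X : Type u} [TopologicalSpace X]

attribute [local instance] TopologicalSpace.vietoris

def ofRange {ι : Type*} [Finite ι] [Nonempty ι] (y : ι → X) : NonemptyCompacts X :=
  ⟨⟨range y, (finite_range y).isCompact⟩, range_nonempty y⟩

theorem continuous_ofRange {ι : Type*} [Finite ι] [Nonempty ι] :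
    Continuous (ofRange : (ι → X) → NonemptyCompacts X) :=
  isEmbedding_coe.continuous_iff.2 vietoris.continuous_range_of_finite

theorem dense_of_forall_dense_preimage_ofRange {U : Set (NonemptyCompacts X)}
    (hU : ∀ (ι : Type u) [Finite ι] [Nonempty ι], Dense (ofRange ⁻¹' U : Set (ι → X))) :
    Dense U := by
  refine dense_closure.1 (dense_setOfPred_finite.mono fun K (hK : (K : Set X).Finite) => ?_)
  have : Finite ↥(K : Set X) := hK
  have : Nonempty ↥(K : Set X) := K.nonempty.to_subtype
  have hK_eq : ofRange (Subtype.val : ↥(K : Set X) → X) = K :=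
    NonemptyCompacts.ext Subtype.range_val
  rw [← hK_eq]
  exact closure_mono (image_preimage_subset _ _)
    (continuous_ofRange.range_subset_closure_image_dense (hU _) (mem_range_self _))

end TopologicalSpace.NonemptyCompacts

section Group

variable {G : Type*} [Group G]

theorem inv_mul_inter_eq_empty_iff {s t C : Set G} :
    s⁻¹ * t ∩ C = ∅ ↔ ∀ a ∈ s, ∀ b ∈ t, a⁻¹ * b ∉ C := by
  simp only [eq_empty_iff_forall_notMem, mem_inter_iff, mem_mul, mem_inv, not_and]
  aesop

variable [TopologicalSpace G]

theorem isOpen_setOf_inv_mul_self_inter_eq_empty [IsTopologicalGroup G] {C : Set G}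
    (hC : IsClosed C) :
    IsOpen {K : NonemptyCompacts G | (K : Set G)⁻¹ * K ∩ C = ∅} := by
  have hcont : Continuous fun K : NonemptyCompacts G =>
      (K ×ˢ K).map (fun p : G × G => p.1⁻¹ * p.2) (by fun_prop) := by fun_prop
  convert (NonemptyCompacts.isOpen_subsets_of_isOpen hC.isOpen_compl).preimage hcont using 1
  ext K
  simp only [mem_ofPred_eq, mem_preimage, NonemptyCompacts.coe_map, NonemptyCompacts.coe_prod,
    image_subset_iff, inv_mul_inter_eq_empty_iff]
  exact ⟨fun h p hp => h _ hp.1 _ hp.2, fun h a ha b hb => h (mk_mem_prod ha hb)⟩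

theorem isOpenMap_inv_mul_apply [ContinuousMul G] {ι : Type*} {i j : ι} (hij : i ≠ j) :
    IsOpenMap fun y : ι → G => (y i)⁻¹ * y j := by
  classical
  exact IsOpenMap.of_sections fun y =>
    ⟨fun g => Function.update y j (y i * g), by fun_prop, by simp, fun g => by simp [hij]⟩

theorem dense_setOf_inv_mul_apply_notMem [ContinuousMul G] {ι : Type*} {C : Set G}
    (hC : interior C = ∅) (h1 : (1 : G) ∉ C) (i j : ι) : Dense {y : ι → G | (y i)⁻¹ * y j ∉ C} := by
  rcases eq_or_ne i j with rfl | hij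
  · simp [h1]
  · exact (interior_eq_empty_iff_dense_compl.1 hC).preimage (isOpenMap_inv_mul_apply hij)

theorem dense_setOf_inv_mul_self_inter_eq_empty [IsTopologicalGroup G] {C : Set G}
    (hC : IsClosed C) (hC₀ : interior C = ∅) (h1 : (1 : G) ∉ C) :
    Dense {K : NonemptyCompacts G | (K : Set G)⁻¹ * K ∩ C = ∅} := by
  refine NonemptyCompacts.dense_of_forall_dense_preimage_ofRange fun ι _ _ => ?_
  have hD : Dense (⋂ p : ι × ι, {y : ι → G | (y p.1)⁻¹ * y p.2 ∉ C}) :=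
    dense_iInter_of_isOpen_of_finite (fun p => hC.isOpen_compl.preimage (by fun_prop))
      (fun p => dense_setOf_inv_mul_apply_notMem hC₀ h1 p.1 p.2)
  refine hD.mono fun y hy => ?_
  show (range y)⁻¹ * range y ∩ C = ∅
  rw [inv_mul_inter_eq_empty_iff]
  simpa using hy

end Group

theorem avoiding_set_open_hereditary_dense_general {G : Type*} [Group G] [MetricSpace G]
    [IsTopologicalGroup G] (C : Set G) (hC : IsClosed C)
    (hnwd : interior C = ∅) (h1 : (1 : G) ∉ C) :
    IsOpen {K : NonemptyCompacts G | ((K : Set G)⁻¹ * (K : Set G)) ∩ C = ∅} ∧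
      Hereditary {K : NonemptyCompacts G | ((K : Set G)⁻¹ * (K : Set G)) ∩ C = ∅} ∧
      Dense {K : NonemptyCompacts G | ((K : Set G)⁻¹ * (K : Set G)) ∩ C = ∅} :=
  ⟨isOpen_setOf_inv_mul_self_inter_eq_empty hC,
    fun _ hK _ hLK => subset_empty_iff.1 <| hK ▸ inter_subset_inter_left C
      (mul_subset_mul (inv_subset_inv.2 hLK) hLK),
    dense_setOf_inv_mul_self_inter_eq_empty hC hnwd h1⟩

theorem avoiding_set_open_hereditary_dense {G : Type*} [Group G] [MetricSpace G]
    [IsTopologicalGroup G] [PolishSpace G] (C : Set G) (hC : IsClosed C)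
    (hnwd : interior C = ∅) (h1 : (1 : G) ∉ C) :
    IsOpen {K : NonemptyCompacts G | ((K : Set G)⁻¹ * (K : Set G)) ∩ C = ∅} ∧
      Hereditary {K : NonemptyCompacts G | ((K : Set G)⁻¹ * (K : Set G)) ∩ C = ∅} ∧
      Dense {K : NonemptyCompacts G | ((K : Set G)⁻¹ * (K : Set G)) ∩ C = ∅} :=
  avoiding_set_open_hereditary_dense_general C hC hnwd h1
end

section
/- Let G be an uncountable Polish group that is not locally compact. Then every compact subset K of G is generically left Haar-null; that is, {μ ∈ P(G) : μ(gK) = 0 for all g ∈ G} is comeager in P(G). -/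
/-!
Since `G` is not locally compact, the compact set `C = K⁻¹ * K` has empty interior. It suffices to
show that for every `ε > 0` the measures giving every left translate of `K` mass `< ε` contain a
dense open set. Finitely supported measures are dense, and splitting atoms and moving them slightly
yields a nearby measure with atoms of mass `< ε / 2` at points `xᵢ` with `xᵢ⁻¹ * xⱼ ∉ C` for
`i ≠ j` (an open dense condition, as `C` is closed with empty interior). For a small open `O ∋ 1`,
each translate `g • K` then meets at most one of the sets `xᵢ • O`, and by the portmanteau theorem
every measure close enough to this one still puts nearly all its mass on the `xᵢ • O`, so it gives
`g • K` at most one atom's mass plus a small error.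
-/

open MeasureTheory Topology Filter Set
open scoped ENNReal Pointwise

namespace MeasureTheory.ProbabilityMeasure

variable {α X : Type*} [MeasurableSpace α] [MeasurableSpace X]

theorem map_id (μ : ProbabilityMeasure α) : μ.map aemeasurable_id = μ :=
  Subtype.ext Measure.map_id

theorem map_simpleFunc_eq_map_val (μ : ProbabilityMeasure α) (f : SimpleFunc α X) :
    μ.map f.measurable.aemeasurable =
      (μ.map (f.measurable.subtype_mk (h := mem_range_self)).aemeasurable).map
        measurable_subtype_coe.aemeasurable :=
  toMeasure_injective <| by
    simp only [toMeasure_map]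
    rw [Measure.map_map measurable_subtype_coe (f.measurable.subtype_mk)]
    rfl

section Topological

variable [TopologicalSpace X] [OpensMeasurableSpace X]

theorem tendsto_map_of_ae_tendsto {ι : Type*} {L : Filter ι} [L.IsCountablyGenerated]
    (μ : ProbabilityMeasure α) {f : ι → α → X} {g : α → X} (hf : ∀ i, AEMeasurable (f i) μ)
    (hg : AEMeasurable g μ) (hlim : ∀ᵐ a ∂(μ : Measure α), Tendsto (fun i ↦ f i a) L (𝓝 (g a))) :
    Tendsto (fun i ↦ μ.map (hf i)) L (𝓝 (μ.map hg)) := by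
  refine tendsto_iff_forall_integral_tendsto.mpr fun F ↦ ?_
  simp only [toMeasure_map]
  rw [integral_map hg F.continuous.measurable.aestronglyMeasurable]
  simp only [integral_map (hf _) F.continuous.measurable.aestronglyMeasurable]
  refine tendsto_integral_filter_of_dominated_convergence (fun _ ↦ ‖F‖)
    (Eventually.of_forall fun i ↦
      (F.continuous.measurable.comp_aemeasurable (hf i)).aestronglyMeasurable)
    (Eventually.of_forall fun i ↦ ae_of_all _ fun a ↦ F.norm_coe_le_norm _)
    (integrable_const _) ?_
  filter_upwards [hlim] with a ha using (F.continuous.tendsto _).comp ha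

theorem continuous_map_of_finite {ι : Type*} [Finite ι] [MeasurableSpace ι]
    [MeasurableSingletonClass ι] [FirstCountableTopology X] (P : ProbabilityMeasure ι) :
    Continuous fun x : ι → X ↦ P.map (Measurable.of_discrete (f := x)).aemeasurable :=
  continuous_iff_continuousAt.mpr fun x ↦ tendsto_map_of_ae_tendsto P _ _ <|
    ae_of_all _ fun i ↦ continuous_apply i |>.tendsto x

end Topological

theorem tendsto_map_nearestPt [PseudoEMetricSpace X] [TopologicalSpace.SeparableSpace X]
    [Nonempty X] [OpensMeasurableSpace X] (μ : ProbabilityMeasure X) :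
    Tendsto (fun n ↦
        μ.map (SimpleFunc.nearestPt (TopologicalSpace.denseSeq X) n).measurable.aemeasurable)
      atTop (𝓝 μ) := by
  simpa only [map_id] using tendsto_map_of_ae_tendsto μ _ aemeasurable_id <|
    ae_of_all _ fun a ↦ SimpleFunc.tendsto_nearestPt <| by
      simp [(TopologicalSpace.denseRange_denseSeq X).closure_range]

end MeasureTheory.ProbabilityMeasure

section TopologicalGroup

variable {G : Type*} [Group G] [TopologicalSpace G] [IsTopologicalGroup G]

theorem dense_setOf_inv_mul_notMem {ι : Type*} [DecidableEq ι] {C : Set G}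
    (hC : interior C = ∅) {i j : ι} (hij : i ≠ j) :
    Dense {x : ι → G | (x i)⁻¹ * x j ∉ C} := by
  intro x
  have hdense : Dense (x i • C)ᶜ := by
    rw [← interior_eq_empty_iff_dense_compl, interior_smul, hC, smul_set_empty]
  have hupdate : Continuous (Function.update x j) := continuous_const.update j continuous_id
  have hmaps : MapsTo (Function.update x j) (x i • C)ᶜ {x : ι → G | (x i)⁻¹ * x j ∉ C} := by
    intro y hy
    simpa [Function.update_of_ne hij, mem_smul_set_iff_inv_smul_mem] using hy
  simpa using hmaps.closure hupdate (hdense (x j))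

theorem dense_setOf_pairwise_inv_mul_notMem {ι : Type*} [Finite ι] {C : Set G} (hC : IsClosed C)
    (hCi : interior C = ∅) : Dense {x : ι → G | Pairwise fun i j ↦ (x i)⁻¹ * x j ∉ C} := by
  classical
  let pair (p : {p : ι × ι // p.1 ≠ p.2}) : Set (ι → G) := {x | (x p.1.1)⁻¹ * x p.1.2 ∉ C}
  have hset : {x : ι → G | Pairwise fun i j ↦ (x i)⁻¹ * x j ∉ C} = ⋂₀ range pair := by
    ext x
    simp [pair, Pairwise]
  rw [hset]
  refine (toFinite (range pair)).dense_sInter ?_ ?_ <;> rintro _ ⟨⟨⟨i, j⟩, hij⟩, rfl⟩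
  · exact hC.isOpen_compl.preimage (by fun_prop)
  · exact dense_setOf_inv_mul_notMem hCi hij

theorem eventually_inv_mul_mul_notMem {C : Set G} (hC : IsClosed C) {q : G} (hq : q ∉ C) :
    ∀ᶠ p in 𝓝 (1 : G) ×ˢ 𝓝 1, p.1⁻¹ * q * p.2 ∉ C := by
  rw [← nhds_prod_eq]
  have hcont : Continuous fun p : G × G ↦ p.1⁻¹ * q * p.2 := by fun_prop
  simpa using (hcont.tendsto (1, 1)).eventually (hC.isOpen_compl.eventually_mem (by simpa using hq))

theorem exists_isOpen_subsingleton_setOf_not_disjoint_smul {ι : Type*} [Finite ι] {K : Set G}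
    (hC : IsClosed (K⁻¹ * K)) {x : ι → G} (hx : Pairwise fun i j ↦ (x i)⁻¹ * x j ∉ K⁻¹ * K) :
    ∃ O : Set G, IsOpen O ∧ (1 : G) ∈ O ∧
      ∀ g : G, {i | ¬Disjoint (g • K) (x i • O)}.Subsingleton := by
  have hev : ∀ᶠ p in 𝓝 (1 : G) ×ˢ 𝓝 1, ∀ i j, i ≠ j → p.1⁻¹ * ((x i)⁻¹ * x j) * p.2 ∉ K⁻¹ * K :=
    eventually_all.2 fun i ↦ eventually_all.2 fun j ↦ by
      by_cases hij : i = j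
      · exact Eventually.of_forall fun _ h ↦ (h hij).elim
      · exact (eventually_inv_mul_mul_notMem hC (hx hij)).mono fun _ h _ ↦ h
  obtain ⟨t, ht, hts⟩ := mem_prod_self_iff.1 hev
  refine ⟨interior t, isOpen_interior, mem_interior_iff_mem_nhds.2 ht, fun g i hi j hj ↦ ?_⟩
  by_contra hij
  obtain ⟨_, ⟨k, hk, rfl⟩, u, hu, hku⟩ := not_disjoint_iff.1 hi
  obtain ⟨_, ⟨k', hk', rfl⟩, v, hv, hkv⟩ := not_disjoint_iff.1 hj
  refine hts (mk_mem_prod (interior_subset hu) (interior_subset hv)) i j hij ?_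
  simp only [smul_eq_mul] at hku hkv
  have : u⁻¹ * ((x i)⁻¹ * x j) * v = k⁻¹ * k' :=
    calc u⁻¹ * ((x i)⁻¹ * x j) * v = (x i * u)⁻¹ * (x j * v) := by group
      _ = (g * k)⁻¹ * (g * k') := by rw [hku, hkv]
      _ = k⁻¹ * k' := by group
  exact this ▸ mul_mem_mul (inv_mem_inv.2 hk) hk'

end TopologicalGroup

theorem MeasureTheory.measure_lt_add_measure_setOf_not_disjoint {X ι : Type*} [MeasurableSpace X]
    [MeasurableSpace ι] [Countable ι] [DiscreteMeasurableSpace ι]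
    {ν : Measure X} [IsProbabilityMeasure ν] {P : Measure ι} [IsProbabilityMeasure P]
    {x : ι → X} {S : ι → Set X} (hS : ∀ i, MeasurableSet (S i)) (hxS : ∀ i, x i ∈ S i)
    {A : Set X} {δ : ℝ≥0∞}
    (h : P.map x (⋃ i ∈ {i | Disjoint A (S i)}, S i) < ν (⋃ i ∈ {i | Disjoint A (S i)}, S i) + δ) :
    ν A < δ + P {i | ¬Disjoint A (S i)} := by
  set s := {i | Disjoint A (S i)}
  set U := ⋃ i ∈ s, S i
  have hU : MeasurableSet U := MeasurableSet.biUnion (to_countable s) fun i _ ↦ hS i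
  have hPU : P s ≤ P.map x U := by
    rw [Measure.map_apply Measurable.of_discrete hU]
    exact measure_mono fun i hi ↦ mem_biUnion hi (hxS i)
  have hνU : ν U + ν A ≤ 1 := by
    have hAU : Disjoint A U := disjoint_iUnion₂_right.2 fun _ hi ↦ hi
    rw [add_comm, ← measure_union hAU hU]
    exact prob_le_one
  have hP : P s + P sᶜ = 1 := by
    rw [measure_add_measure_compl (MeasurableSet.of_discrete), measure_univ]
  rw [← ENNReal.add_lt_add_iff_left (measure_ne_top ν U)]
  calc ν U + ν A ≤ P s + P sᶜ := hνU.trans hP.ge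
    _ ≤ P.map x U + P sᶜ := by gcongr
    _ < ν U + δ + P sᶜ := ENNReal.add_lt_add_right (measure_ne_top P _) h
    _ = ν U + (δ + P {i | ¬Disjoint A (S i)}) := by rw [add_assoc]; rfl

theorem MeasureTheory.Measure.prod_uniformOfFintype_le_of_subsingleton {ι : Type*}
    [MeasurableSpace ι] [MeasurableSingletonClass ι] (μ : Measure ι) [IsProbabilityMeasure μ]
    (R : ℕ) [NeZero R] {s : Set (ι × Fin R)} (hs : s.Subsingleton) :
    μ.prod (PMF.uniformOfFintype (Fin R)).toMeasure s ≤ (R : ℝ≥0∞)⁻¹ := by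
  obtain rfl | ⟨⟨i, t⟩, rfl⟩ := hs.eq_empty_or_singleton
  · simp
  · rw [← singleton_prod_singleton, Measure.prod_prod,
      PMF.toMeasure_apply_singleton _ _ (measurableSet_singleton t), PMF.uniformOfFintype_apply,
      Fintype.card_fin]
    exact mul_le_of_le_one_left' prob_le_one

section MetricGroup

variable {G : Type*} [Group G] [MetricSpace G] [IsTopologicalGroup G] [MeasurableSpace G]
  [BorelSpace G]

theorem map_mem_closure_interior_setOf_measure_smul_lt {K : Set G} (hC : IsClosed (K⁻¹ * K))
    (hCi : interior (K⁻¹ * K) = ∅) {ε : ℝ≥0∞} (hε : ε ≠ 0) {ι : Type*} [Finite ι]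
    [MeasurableSpace ι] [MeasurableSingletonClass ι] (P : ProbabilityMeasure ι) (x : ι → G) :
    P.map (Measurable.of_discrete (f := x)).aemeasurable ∈
      closure (interior {μ : ProbabilityMeasure G | ∀ g : G, (μ : Measure G) (g • K) < ε}) := by
  rw [mem_closure_iff_nhds]
  intro V hV
  obtain ⟨R, hR⟩ := ENNReal.exists_inv_nat_lt (ENNReal.half_pos hε).ne'
  have : NeZero R := ⟨by rintro rfl; simp at hR⟩
  set P' := P.prod ⟨(PMF.uniformOfFintype (Fin R)).toMeasure, inferInstance⟩
  have hsplit : P'.map (Measurable.of_discrete (f := x ∘ Prod.fst)).aemeasurable =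
      P.map (Measurable.of_discrete (f := x)).aemeasurable := by
    refine ProbabilityMeasure.toMeasure_injective ?_
    simp only [ProbabilityMeasure.toMeasure_map]
    rw [← Measure.map_map .of_discrete measurable_fst]
    exact congrArg (fun μ : ProbabilityMeasure ι ↦ (μ : Measure ι).map x)
      (ProbabilityMeasure.map_fst_prod _ _)
  have hVy : {y : ι × Fin R → G | P'.map (Measurable.of_discrete (f := y)).aemeasurable ∈ V} ∈
      𝓝 (x ∘ Prod.fst) :=
    (ProbabilityMeasure.continuous_map_of_finite P').continuousAt.preimage_mem_nhds (hsplit ▸ hV)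
  obtain ⟨y, hy, hyV⟩ := (dense_setOf_pairwise_inv_mul_notMem hC hCi).inter_nhds_nonempty hVy
  obtain ⟨O, hO, hO1, hsep⟩ := exists_isOpen_subsingleton_setOf_not_disjoint_smul hC hy
  refine ⟨_, hyV, mem_interior_iff_mem_nhds.2 ?_⟩
  have hnear : ∀ᶠ ν : ProbabilityMeasure G in
      𝓝 (P'.map (Measurable.of_discrete (f := y)).aemeasurable), ∀ s : Set (ι × Fin R),
        (P'.map (Measurable.of_discrete (f := y)).aemeasurable : Measure G) (⋃ j ∈ s, y j • O) <
          (ν : Measure G) (⋃ j ∈ s, y j • O) + ε / 2 :=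
    eventually_all.2 fun s ↦ ProbabilityMeasure.toMeasure_add_pos_gt_mem_nhds _
      (isOpen_biUnion fun j _ ↦ hO.smul (y j)) (ENNReal.half_pos hε)
  filter_upwards [hnear] with ν hν g
  calc (ν : Measure G) (g • K) < ε / 2 + (P' : Measure _) {j | ¬Disjoint (g • K) (y j • O)} :=
        measure_lt_add_measure_setOf_not_disjoint (fun j ↦ (hO.smul (y j)).measurableSet)
          (fun j ↦ mem_smul_set.2 ⟨1, hO1, mul_one _⟩) (hν _)
    _ ≤ ε / 2 + ε / 2 := by
        gcongr
        exact (Measure.prod_uniformOfFintype_le_of_subsingleton _ R (hsep g)).trans hR.le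
    _ = ε := ENNReal.add_halves ε

theorem dense_interior_setOf_measure_smul_lt [TopologicalSpace.SeparableSpace G] {K : Set G}
    (hC : IsClosed (K⁻¹ * K)) (hCi : interior (K⁻¹ * K) = ∅) {ε : ℝ≥0∞} (hε : ε ≠ 0) :
    Dense (interior {μ : ProbabilityMeasure G | ∀ g : G, (μ : Measure G) (g • K) < ε}) := by
  intro μ
  refine isClosed_closure.mem_of_tendsto (ProbabilityMeasure.tendsto_map_nearestPt μ)
    (Eventually.of_forall fun n ↦ ?_)
  have : Finite (range (SimpleFunc.nearestPt (TopologicalSpace.denseSeq G) n)) :=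
    (SimpleFunc.finite_range _).to_subtype
  rw [ProbabilityMeasure.map_simpleFunc_eq_map_val]
  exact map_mem_closure_interior_setOf_measure_smul_lt hC hCi hε _ _

end MetricGroup

theorem compact_generically_left_haar_null_general {G : Type*} [Group G] [MetricSpace G]
    [IsTopologicalGroup G] [PolishSpace G] [MeasurableSpace G] [BorelSpace G]
    (hnlc : ¬ LocallyCompactSpace G) (K : Set G)
    (hK : IsCompact K) :
    {μ : ProbabilityMeasure G | ∀ g : G, μ ((fun x => g * x) '' K) = 0} ∈
      residual (ProbabilityMeasure G) := by
  have hC : IsCompact (K⁻¹ * K) := hK.inv.mul hK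
  have hCi : interior (K⁻¹ * K) = ∅ := by
    by_contra h
    obtain ⟨y, hy⟩ := nonempty_iff_ne_empty.2 h
    exact hnlc (hC.locallyCompactSpace_of_mem_nhds_of_group (mem_interior_iff_mem_nhds.1 hy))
  have hres : ∀ n : ℕ, interior {μ : ProbabilityMeasure G | ∀ g : G,
      (μ : Measure G) (g • K) < (n : ℝ≥0∞)⁻¹} ∈ residual (ProbabilityMeasure G) := fun n ↦
    residual_of_dense_open isOpen_interior <| dense_interior_setOf_measure_smul_lt hC.isClosed hCi
      (ENNReal.inv_ne_zero.2 (ENNReal.natCast_ne_top n))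
  filter_upwards [countable_iInter_mem.2 hres] with μ hμ g
  rw [ProbabilityMeasure.null_iff_toMeasure_null]
  by_contra h
  obtain ⟨n, hn⟩ := ENNReal.exists_inv_nat_lt h
  exact (interior_subset (mem_iInter.1 hμ n) g).not_gt hn

theorem compact_generically_left_haar_null {G : Type*} [Group G] [MetricSpace G]
    [IsTopologicalGroup G] [PolishSpace G] [MeasurableSpace G] [BorelSpace G]
    [Uncountable G] (hnlc : ¬ LocallyCompactSpace G) (K : Set G)
    (hK : IsCompact K) :
    {μ : ProbabilityMeasure G | ∀ g : G, μ ((fun x => g * x) '' K) = 0} ∈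
      residual (ProbabilityMeasure G) :=
  compact_generically_left_haar_null_general hnlc K hK
end

section
/- Let G₁ and G₂ be Polish groups each satisfying condition (C): for every analytic meager subset A, the conjugate saturation [A] = {g a g⁻¹ : g ∈ G, a ∈ A} is meager. Then the product group G₁ × G₂ also satisfies condition (C). -/
/-!
Conjugation in `G₁ × G₂` is conjugation in the `G₂`-coordinate followed by conjugation in the
`G₁`-coordinate. Let `A` be analytic and meagre. By Kuratowski–Ulam almost every section `A_x`
is meagre, and it is analytic, so by (C) for `G₂` its saturation is meagre. The set `B` obtained
by saturating each section is analytic, hence has the Baire property, so Kuratowski–Ulam applies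
in the converse direction and `B` is meagre. Swapping the coordinates and using (C) for `G₁`
saturates `B` in the first coordinate.

That analytic sets have the Baire property is proved by taking Baire hulls `T s` of the images
`f (N s)` of the basic cylinders: off the meagre set where some `T s` is not covered by its
successors `T (n :: s)`, every point of `T []` lies on a branch and is thus a value of `f`.
-/

open MeasureTheory

/-- Condition (C): the conjugate saturation of every analytic meager set is meager. -/
def CondC (G : Type*) [Group G] [TopologicalSpace G] : Prop :=
  ∀ A : Set G, AnalyticSet A → IsMeagre A →
    IsMeagre {x : G | ∃ g : G, ∃ a ∈ A, x = g * a * g⁻¹}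

open Set Topology Filter

section KuratowskiUlam

variable {α β : Type*} [TopologicalSpace α] [TopologicalSpace β]

theorem IsOpen.eventually_dense_prodMk_preimage [SecondCountableTopology β] {U : Set (α × β)}
    (hU : IsOpen U) (hd : Dense U) : ∀ᶠ x in residual α, Dense (Prod.mk x ⁻¹' U) := by
  obtain ⟨b, hbc, hbne, hb⟩ := TopologicalSpace.exists_countable_basis β
  have hproj : ∀ V ∈ b, Prod.fst '' (U ∩ univ ×ˢ V) ∈ residual α := by
    intro V hV
    have hVo := hb.isOpen hV
    refine residual_of_dense_open (isOpenMap_fst _ (hU.inter (isOpen_univ.prod hVo))) ?_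
    refine dense_iff_inter_open.2 fun O hO ⟨x, hx⟩ => ?_
    obtain ⟨y, hy⟩ := nonempty_iff_ne_empty.2 fun h => hbne (h ▸ hV)
    obtain ⟨p, ⟨hpO, hpV⟩, hpU⟩ :=
      hd.inter_open_nonempty _ (hO.prod hVo) ⟨(x, y), hx, hy⟩
    exact ⟨p.1, hpO, p, ⟨hpU, trivial, hpV⟩, rfl⟩
  filter_upwards [(countable_bInter_mem hbc).2 hproj] with x hx
  refine hb.dense_iff.2 fun V hV _ => ?_
  obtain ⟨⟨x', y⟩, ⟨hU, -, hyV⟩, rfl⟩ := mem_iInter₂.1 hx V hV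
  exact ⟨y, hyV, hU⟩

theorem Filter.Eventually.curry_residual [SecondCountableTopology β] {P : α × β → Prop}
    (h : ∀ᶠ p in residual (α × β), P p) :
    ∀ᶠ x in residual α, ∀ᶠ y in residual β, P (x, y) := by
  obtain ⟨𝒰, h𝒰o, h𝒰d, h𝒰c, h𝒰P⟩ := mem_residual_iff.1 h
  filter_upwards [(eventually_countable_ball h𝒰c).2 fun U hU =>
    (h𝒰o U hU).eventually_dense_prodMk_preimage (h𝒰d U hU)] with x hx
  filter_upwards [(eventually_countable_ball h𝒰c).2 fun U hU =>
    residual_of_dense_open ((h𝒰o U hU).preimage (by fun_prop)) (hx U hU)] with y hy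
  exact h𝒰P (mem_sInter.2 hy)

theorem IsMeagre.eventually_isMeagre_prodMk_preimage [SecondCountableTopology β]
    {S : Set (α × β)} (hS : IsMeagre S) :
    ∀ᶠ x in residual α, IsMeagre (Prod.mk x ⁻¹' S) :=
  Filter.Eventually.curry_residual hS

theorem BaireMeasurableSet.isMeagre_of_eventually_isMeagre_prodMk_preimage [BaireSpace α]
    [BaireSpace β] [SecondCountableTopology β] {S : Set (α × β)} (hS : BaireMeasurableSet S)
    (h : ∀ᶠ x in residual α, IsMeagre (Prod.mk x ⁻¹' S)) : IsMeagre S := by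
  obtain ⟨U, hUo, hSU⟩ := hS.residualEq_isOpen
  have hSU' : ∀ᶠ p in residual (α × β), p ∈ S ↔ p ∈ U := eventuallyEq_set.1 hSU
  have hsec : ∀ᶠ x in residual α, Prod.mk x ⁻¹' U = ∅ := by
    filter_upwards [h, hSU'.curry_residual] with x hxS hxSU
    by_contra hne
    refine not_isMeagre_of_isOpen (hUo.preimage (by fun_prop)) (nonempty_iff_ne_empty.2 hne) ?_
    filter_upwards [hxS, hxSU] with y hyS hy hyU using hyS (hy.2 hyU)
  have hU : U = ∅ := by
    refine eq_empty_iff_forall_notMem.2 fun ⟨x, y⟩ hxy => ?_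
    obtain ⟨O, V, hO, -, hxO, hyV, hOV⟩ := isOpen_prod_iff.1 hUo x y hxy
    obtain ⟨x', hx'O, hx'⟩ := (dense_of_mem_residual hsec).inter_open_nonempty O hO ⟨x, hxO⟩
    exact (eq_empty_iff_forall_notMem.1 hx') y (hOV (mk_mem_prod hx'O hyV))
  filter_upwards [hSU'] with p hp hpS
  simpa [hU] using hp.1 hpS

end KuratowskiUlam

section BaireHull

variable {X : Type*} [TopologicalSpace X] [SecondCountableTopology X]

theorem exists_isOpen_isMeagre_inter_forall_subset (S : Set X) :
    ∃ W, IsOpen W ∧ IsMeagre (W ∩ S) ∧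
      ∀ U, IsOpen U → IsMeagre (U ∩ S) → U ⊆ W := by
  obtain ⟨b, hbc, -, hb⟩ := TopologicalSpace.exists_countable_basis X
  set 𝒱 := {V ∈ b | IsMeagre (V ∩ S)}
  have : Countable 𝒱 := (hbc.mono (sep_subset _ _)).to_subtype
  refine ⟨⋃₀ 𝒱, isOpen_sUnion fun V hV => hb.isOpen hV.1, ?_, fun U hU hUS p hp => ?_⟩
  · rw [sUnion_eq_iUnion, iUnion_inter]
    exact isMeagre_iUnion fun V => V.2.2
  · obtain ⟨V, hVb, hpV, hVU⟩ := hb.exists_subset_of_mem_open hp hU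
    exact ⟨V, ⟨hVb, hUS.mono (inter_subset_inter_left S hVU)⟩, hpV⟩

theorem exists_baireMeasurableSet_hull (S : Set X) :
    ∃ T, S ⊆ T ∧ T ⊆ closure S ∧ BaireMeasurableSet T ∧
      ∀ B ⊆ T \ S, BaireMeasurableSet B → IsMeagre B := by
  obtain ⟨W, hWo, hWS, hWmax⟩ := exists_isOpen_isMeagre_inter_forall_subset S
  refine ⟨closure S \ (W \ S), fun p hp => ⟨subset_closure hp, fun h => h.2 hp⟩, sdiff_subset,
    ?_, fun B hB hBm => ?_⟩
  · refine isClosed_closure.isOpen_compl.baireMeasurableSet.of_compl.diff ?_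
    rw [← sdiff_self_inter]
    exact hWo.baireMeasurableSet.diff hWS.baireMeasurableSet
  obtain ⟨U, hUo, hBU⟩ := hBm.residualEq_isOpen
  have hBU' : ∀ᶠ p in residual X, p ∈ B ↔ p ∈ U := eventuallyEq_set.1 hBU
  have hUW : U ⊆ W := hWmax U hUo <| by
    filter_upwards [hBU'] with p hp ⟨hpU, hpS⟩ using (hB (hp.2 hpU)).2 hpS
  filter_upwards [hBU'] with p hp hpB
  exact (hB hpB).1.2 ⟨hUW (hp.1 hpB), (hB hpB).2⟩

end BaireHull

theorem PiNat.exists_forall_res {α : Type*} {P : List α → Prop} (h0 : P [])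
    (hstep : ∀ s, P s → ∃ a, P (a :: s)) :
    ∃ σ : ℕ → α, ∀ n, P (PiNat.res σ n) := by
  choose next hnext using hstep
  let u : ℕ → {s // P s} := fun n => Nat.rec ⟨[], h0⟩ (fun _ s => ⟨_, hnext s.1 s.2⟩) n
  refine ⟨fun n => next (u n).1 (u n).2, fun n => ?_⟩
  suffices PiNat.res (fun n => next (u n).1 (u n).2) n = (u n).1 from this ▸ (u n).2
  induction n with
  | zero => rfl
  | succ n ih => rw [PiNat.res_succ, ih]

theorem PiNat.eq_of_forall_mem_closure_image_cylinder {E : ℕ → Type*}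
    [∀ n, TopologicalSpace (E n)] [∀ n, DiscreteTopology (E n)] {X : Type*} [TopologicalSpace X]
    [T2Space X] {f : (∀ n, E n) → X} (hf : Continuous f) {σ : ∀ n, E n} {x : X}
    (h : ∀ n, x ∈ closure (f '' PiNat.cylinder σ n)) : x = f σ := by
  by_contra hne
  obtain ⟨u, v, hu, hv, hxu, hσv, huv⟩ := t2_separation hne
  obtain ⟨_, ⟨τ, n, rfl⟩, hστ, hsub⟩ :=
    (PiNat.isTopologicalBasis_cylinders E).exists_subset_of_mem_open
      (show σ ∈ f ⁻¹' v from hσv) (hv.preimage hf)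
  rw [← PiNat.mem_cylinder_iff_eq.1 hστ] at hsub
  obtain ⟨_, hzu, ρ, hρ, rfl⟩ := mem_closure_iff.1 (h n) u hu hxu
  exact disjoint_left.1 huv hzu (hsub hρ)

open PiNat in
theorem MeasureTheory.AnalyticSet.baireMeasurableSet {X : Type*} [TopologicalSpace X] [T2Space X]
    [SecondCountableTopology X] {A : Set X} (hA : AnalyticSet A) : BaireMeasurableSet A := by
  rw [AnalyticSet] at hA
  rcases hA with rfl | ⟨f, hf, rfl⟩
  · exact IsMeagre.empty.baireMeasurableSet
  -- `PiNat.res` lists the first entries of a sequence in reverse order, so the children of the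
  -- cylinder `{τ | res τ s.length = s}` are indexed by the lists `n :: s`.
  let A : List ℕ → Set X := fun s => f '' {τ | res τ s.length = s}
  choose T hAT hTA hTm hThull using fun s => exists_baireMeasurableSet_hull (A s)
  have hA_cons : ∀ s, A s ⊆ ⋃ n, T (n :: s) := by
    rintro s _ ⟨τ, hτ, rfl⟩
    exact mem_iUnion.2 ⟨τ s.length, hAT _ ⟨τ, by simpa using hτ, rfl⟩⟩
  have hsplit : ∀ᶠ x in residual X, ∀ s, x ∈ T s → x ∈ ⋃ n, T (n :: s) := by
    refine eventually_countable_forall.2 fun s => ?_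
    have hgap : T s \ ⋃ n, T (n :: s) ⊆ T s \ A s :=
      fun x hx => ⟨hx.1, fun hxA => hx.2 (hA_cons s hxA)⟩
    filter_upwards [hThull s _ hgap ((hTm s).diff (.iUnion fun n => hTm _))] with x hx hxT
    exact not_not.1 fun h => hx ⟨hxT, h⟩
  have hrange : ∀ᶠ x in residual X, x ∈ T [] ↔ x ∈ range f := by
    filter_upwards [hsplit] with x hx
    refine ⟨fun hx0 => ?_, fun hx0 => hAT [] (by simpa [A] using hx0)⟩
    obtain ⟨σ, hσ⟩ := exists_forall_res hx0 fun s hs => mem_iUnion.1 (hx s hs)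
    refine ⟨σ, (eq_of_forall_mem_closure_image_cylinder hf fun n => ?_).symm⟩
    simpa [A, cylinder_eq_res] using hTA _ (hσ n)
  exact (hTm []).congr (eventuallyEq_set.2 hrange)

def fiberConjSat {X G : Type*} [Group G] (A : Set (X × G)) : Set (X × G) :=
  {p | ∃ g : G, ∃ a, (p.1, a) ∈ A ∧ p.2 = g * a * g⁻¹}

section FiberConj

variable {X G : Type*} [TopologicalSpace X] [PolishSpace X] [Group G] [TopologicalSpace G]
  [IsTopologicalGroup G] [PolishSpace G]

theorem analyticSet_fiberConjSat {A : Set (X × G)} (hA : AnalyticSet A) :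
    AnalyticSet (fiberConjSat A) := by
  have : fiberConjSat A =
      (fun q : G × (X × G) => (q.2.1, q.1 * q.2.2 * q.1⁻¹)) '' (Prod.snd ⁻¹' A) := by
    ext ⟨x, y⟩
    simp only [fiberConjSat, mem_ofPred_eq, mem_image, mem_preimage, Prod.exists, Prod.mk.injEq]
    constructor
    · rintro ⟨g, a, ha, rfl⟩
      exact ⟨g, x, a, ha, rfl, rfl⟩
    · rintro ⟨g, x, a, ha, rfl, rfl⟩
      exact ⟨g, a, ha, rfl⟩
  rw [this]
  exact (hA.preimage continuous_snd).image_of_continuous (by fun_prop)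

theorem isMeagre_fiberConjSat (hG : CondC G) {A : Set (X × G)} (hA : AnalyticSet A)
    (hAm : IsMeagre A) : IsMeagre (fiberConjSat A) := by
  refine BaireMeasurableSet.isMeagre_of_eventually_isMeagre_prodMk_preimage
    (analyticSet_fiberConjSat hA).baireMeasurableSet ?_
  filter_upwards [hAm.eventually_isMeagre_prodMk_preimage] with x hx
  exact hG _ (hA.preimage (by fun_prop)) hx

end FiberConj

theorem conj_saturation_prod_eq {G₁ G₂ : Type*} [Group G₁] [Group G₂]
    (A : Set (G₁ × G₂)) :
    {x : G₁ × G₂ | ∃ g : G₁ × G₂, ∃ a ∈ A, x = g * a * g⁻¹} =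
      Prod.swap ⁻¹' fiberConjSat (Prod.swap ⁻¹' fiberConjSat A) := by
  ext ⟨x₁, x₂⟩
  simp only [fiberConjSat, mem_ofPred_eq, mem_preimage, Prod.swap_prod_mk, Prod.exists,
    Prod.ext_iff, Prod.mul_def, Prod.inv_mk]
  constructor
  · rintro ⟨g₁, g₂, a₁, a₂, ha, h₁, h₂⟩
    exact ⟨g₁, a₁, ⟨g₂, a₂, ha, h₂⟩, h₁⟩
  · rintro ⟨g₁, a₁, ⟨g₂, a₂, ha, h₂⟩, h₁⟩
    exact ⟨g₁, g₂, a₁, a₂, ha, h₁, h₂⟩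

theorem condC_prod {G₁ G₂ : Type*} [Group G₁] [MetricSpace G₁] [IsTopologicalGroup G₁]
    [PolishSpace G₁] [Group G₂] [MetricSpace G₂] [IsTopologicalGroup G₂]
    [PolishSpace G₂] (h₁ : CondC G₁) (h₂ : CondC G₂) : CondC (G₁ × G₂) := by
  intro A hA hAm
  have hB : AnalyticSet (Prod.swap ⁻¹' fiberConjSat A : Set (G₂ × G₁)) :=
    (analyticSet_fiberConjSat hA).preimage continuous_swap
  have hBm : IsMeagre (Prod.swap ⁻¹' fiberConjSat A : Set (G₂ × G₁)) :=
    (isMeagre_fiberConjSat h₂ hA hAm).preimage_of_isOpenMap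
      continuous_swap (Homeomorph.prodComm G₂ G₁).isOpenMap
  rw [conj_saturation_prod_eq]
  exact (isMeagre_fiberConjSat h₁ hB hBm).preimage_of_isOpenMap
    continuous_swap (Homeomorph.prodComm G₁ G₂).isOpenMap
end
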